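/- Let σ, γ > 0 and t ≥ 0. Then ∫_ℝ (t − 2σ√γ g)(1 − min(1, φ_{σ²γ}(t − σ√γ g)/φ_{σ²γ}(σ√γ g))) φ(g) dg = t, where φ is the standard Gaussian density and φ_{σ²γ} is the centered Gaussian density with variance σ²γ. -/

import Mathlib

/-!
Put `a = σ√γ` and `m = t / a`. The likelihood ratio `φ_{a²}(t - a g) / φ_{a²}(a g)` equals
`φ(g - m) / φ(g)`, so the integrand is `(t - 2 a g) φ(g) - (t - 2 a g) min (φ(g), φ(g - m))`.
The first part integrates to `t`. The second is odd about `g = m / 2`: the reflection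
`g ↦ m - g` swaps `φ(g)` and `φ(g - m)` and negates `t - 2 a g = a (m - 2 g)`.
-/

open MeasureTheory

/-- Standard Gaussian density. -/
noncomputable def stdG (g : ℝ) : ℝ :=
  (Real.sqrt (2 * Real.pi))⁻¹ * Real.exp (-g ^ 2 / 2)

/-- Density of the one-dimensional centered Gaussian with variance `v`. -/
noncomputable def gpdf (v x : ℝ) : ℝ :=
  (Real.sqrt (2 * Real.pi * v))⁻¹ * Real.exp (-x ^ 2 / (2 * v))

open Real

lemma integral_eq_zero_of_comp_sub_left_eq_neg {E : Type*} [NormedAddCommGroup E]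
    [NormedSpace ℝ E] {F : ℝ → E} (m : ℝ) (hF : ∀ x, F (m - x) = -F x) :
    ∫ x, F x = 0 := by
  have h := integral_sub_left_eq_self F volume m
  simp only [hF, integral_neg] at h
  rw [neg_eq_iff_add_eq_zero, ← two_smul ℝ, smul_eq_zero] at h
  exact h.resolve_left two_ne_zero

lemma stdG_eq_mul_exp (g : ℝ) : stdG g = (√(2 * π))⁻¹ * exp (-(1 / 2) * g ^ 2) := by
  rw [stdG]; ring_nf

lemma stdG_pos (g : ℝ) : 0 < stdG g := by
  rw [stdG]; positivity

lemma stdG_neg (g : ℝ) : stdG (-g) = stdG g := by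
  simp only [stdG, neg_sq]

@[fun_prop]
lemma continuous_stdG : Continuous stdG := by
  unfold stdG; fun_prop

lemma integrable_stdG : Integrable stdG := by
  simp_rw [funext stdG_eq_mul_exp]
  exact (integrable_exp_neg_mul_sq (by norm_num)).const_mul _

lemma integrable_mul_stdG : Integrable fun g ↦ g * stdG g := by
  simp_rw [stdG_eq_mul_exp, mul_left_comm _ (√(2 * π))⁻¹]
  exact (integrable_mul_exp_neg_mul_sq (by norm_num)).const_mul _

lemma integral_stdG : ∫ g, stdG g = 1 := by
  simp_rw [stdG_eq_mul_exp, integral_const_mul, integral_gaussian]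
  rw [div_div_eq_mul_div, div_one, mul_comm π 2, inv_mul_cancel₀ (by positivity)]

lemma integral_mul_stdG : ∫ g, g * stdG g = 0 :=
  integral_eq_zero_of_comp_sub_left_eq_neg 0 fun g ↦ by rw [zero_sub, stdG_neg, neg_mul]

lemma integrable_affine_mul_stdG (b c : ℝ) : Integrable fun g ↦ (b + c * g) * stdG g := by
  simp_rw [add_mul, mul_assoc]
  exact (integrable_stdG.const_mul b).add (integrable_mul_stdG.const_mul c)

lemma integral_affine_mul_stdG (b c : ℝ) : ∫ g, (b + c * g) * stdG g = b := by
  simp_rw [add_mul, mul_assoc]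
  rw [integral_add (integrable_stdG.const_mul b) (integrable_mul_stdG.const_mul c),
    integral_const_mul, integral_const_mul, integral_stdG, integral_mul_stdG]
  ring

lemma integrable_mul_min_stdG_sub (m : ℝ) :
    Integrable fun g ↦ (m - 2 * g) * min (stdG g) (stdG (g - m)) := by
  refine (integrable_affine_mul_stdG m (-2)).mono (by fun_prop) (ae_of_all _ fun g ↦ ?_)
  rw [neg_mul, ← sub_eq_add_neg, norm_mul, norm_mul]
  gcongr
  rw [Real.norm_of_nonneg (le_min (stdG_pos g).le (stdG_pos _).le),
    Real.norm_of_nonneg (stdG_pos g).le]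
  exact min_le_left _ _

lemma integral_mul_min_stdG_sub (m : ℝ) :
    ∫ g, (m - 2 * g) * min (stdG g) (stdG (g - m)) = 0 := by
  refine integral_eq_zero_of_comp_sub_left_eq_neg m fun g ↦ ?_
  rw [show m - g - m = -g by ring, stdG_neg, ← stdG_neg (m - g), neg_sub, min_comm]
  ring

lemma gpdf_div_gpdf_mul_stdG {a : ℝ} (ha : a ≠ 0) (t g : ℝ) :
    gpdf (a ^ 2) (t - a * g) / gpdf (a ^ 2) (a * g) * stdG g = stdG (g - t / a) := by
  have hC : (√(2 * π * a ^ 2))⁻¹ ≠ 0 := by positivity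
  rw [gpdf, gpdf, mul_div_mul_left _ _ hC, ← exp_sub, stdG, stdG, mul_left_comm, ← exp_add]
  congr 2
  field_simp
  ring

theorem sticky_first_moment_general (σ γ t : ℝ) (hσ : 0 < σ) (hγ : 0 < γ) :
    ∫ g : ℝ,
      (t - 2 * σ * Real.sqrt γ * g) *
        (1 - min 1 (gpdf (σ ^ 2 * γ) (t - σ * Real.sqrt γ * g) /
          gpdf (σ ^ 2 * γ) (σ * Real.sqrt γ * g))) * stdG g = t := by
  set a := σ * √γ
  have ha : a ≠ 0 := by positivity
  have hv : σ ^ 2 * γ = a ^ 2 := by rw [mul_pow, sq_sqrt hγ.le]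
  have hsplit : ∀ g, (t - 2 * σ * √γ * g) * (1 - min 1 (gpdf (σ ^ 2 * γ) (t - a * g) /
      gpdf (σ ^ 2 * γ) (a * g))) * stdG g = (t + -2 * a * g) * stdG g
        - a * ((t / a - 2 * g) * min (stdG g) (stdG (g - t / a))) := by
    intro g
    have hmin : min 1 (gpdf (a ^ 2) (t - a * g) / gpdf (a ^ 2) (a * g)) * stdG g
        = min (stdG g) (stdG (g - t / a)) := by
      rw [min_mul_of_nonneg _ _ (stdG_pos g).le, one_mul, gpdf_div_gpdf_mul_stdG ha]
    rw [hv, ← hmin]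
    field_simp
    ring
  simp_rw [hsplit]
  rw [integral_sub (integrable_affine_mul_stdG t _)
      ((integrable_mul_min_stdG_sub _).const_mul a),
    integral_affine_mul_stdG, integral_const_mul, integral_mul_min_stdG_sub, mul_zero, sub_zero]

theorem sticky_first_moment (σ γ t : ℝ) (hσ : 0 < σ) (hγ : 0 < γ) (ht : 0 ≤ t) :
    ∫ g : ℝ,
      (t - 2 * σ * Real.sqrt γ * g) *
        (1 - min 1 (gpdf (σ ^ 2 * γ) (t - σ * Real.sqrt γ * g) /
          gpdf (σ ^ 2 * γ) (σ * Real.sqrt γ * g))) * stdG g = t :=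
  sticky_first_moment_general σ γ t hσ hγ
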